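/- Static lower bound for the time-expanded problem (flow form of the lower-bound part of Theorem 3): let m be the minimum of Σ_{(v,v') ∈ E} d(v,v')·G(v,v') over all pairs of functions g, G : E → ℕ such that the net outflow of g at every station v equals z^0(v) − z^T(v), the net outflow of G at every station equals 0, and g(e) ≤ L·G(e) for every edge e (assuming at least one such pair exists). Then every pair (f, F) of car and driver flows on the time-expanded network G^T satisfying the car source/sink constraints for z^0, z^T, the driver source/sink constraints for k drivers at the depot, flow conservation for both flows at all internal nodes, and the coupling constraint f(a) ≤ L·F(a) on every relocation arc, has total cost Σ_{a ∈ A_L} C(a)·F(a) ≥ m. -/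
import Mathlib


open Finset

variable {V : Type*} [Fintype V] [DecidableEq V]

/-- The relocation arcs `A_L` of the time-expanded network `G^T`:
for each edge `(v,v') ∈ E` and each time `t` with `t + d(v,v') ≤ T`,
an arc from `(v,t)` to `(v', t + d(v,v'))`. -/
def relocArcs (E : Finset (V × V)) (d : V × V → ℕ) (T : ℕ) :
    Finset ((V × ℕ) × (V × ℕ)) :=
  ((Finset.univ ×ˢ Finset.range (T + 1)) ×ˢ
      (Finset.univ ×ˢ Finset.range (T + 1))).filter
    (fun a => (a.1.1, a.2.1) ∈ E ∧ a.2.2 = a.1.2 + d (a.1.1, a.2.1) ∧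
      a.1.2 + d (a.1.1, a.2.1) ≤ T)

/-- The holdover arcs `A_H` of the time-expanded network `G^T`:
for each station `v` and each `t ∈ {0,…,T-1}`, an arc from `(v,t)` to `(v,t+1)`. -/
def holdArcs (T : ℕ) : Finset ((V × ℕ) × (V × ℕ)) :=
  ((Finset.univ ×ˢ Finset.range (T + 1)) ×ˢ
      (Finset.univ ×ˢ Finset.range (T + 1))).filter
    (fun a => a.2.1 = a.1.1 ∧ a.2.2 = a.1.2 + 1 ∧ a.1.2 + 1 ≤ T)

/-- The arc set `A_T = A_H ∪ A_L` of the time-expanded network `G^T`. -/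
def arcs (E : Finset (V × V)) (d : V × V → ℕ) (T : ℕ) :
    Finset ((V × ℕ) × (V × ℕ)) :=
  holdArcs T ∪ relocArcs E d T

/-- The outflow of a flow `F` at a node `n` of `G^T`: the sum of `F` over the
arcs of `G^T` leaving `n`. -/
def outflow (E : Finset (V × V)) (d : V × V → ℕ) (T : ℕ)
    (F : (V × ℕ) × (V × ℕ) → ℕ) (n : V × ℕ) : ℕ :=
  ∑ a ∈ (arcs E d T).filter (fun a => a.1 = n), F a

/-- The inflow of a flow `F` at a node `n` of `G^T`: the sum of `F` over the
arcs of `G^T` entering `n`. -/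
def inflow (E : Finset (V × V)) (d : V × V → ℕ) (T : ℕ)
    (F : (V × ℕ) × (V × ℕ) → ℕ) (n : V × ℕ) : ℕ :=
  ∑ a ∈ (arcs E d T).filter (fun a => a.2 = n), F a

/-- The cost of an arc of `G^T`: a relocation arc corresponding to the edge
`(v,v')` costs `d(v,v')`; holdover arcs (same station) cost `0`. -/
def arcCost (d : V × V → ℕ) (a : (V × ℕ) × (V × ℕ)) : ℕ :=
  if a.1.1 = a.2.1 then 0 else d (a.1.1, a.2.1)

/-- A feasible pair `(g, G)` of static car and driver flows on the edge set
`E`: the net outflow of `g` at every station `v` equals `z^0(v) − z^T(v)`, the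
net outflow of `G` at every station is `0`, and `g e ≤ L·G e` on every edge. -/
def StaticFeasible (E : Finset (V × V)) (L : ℕ) (z0 zT : V → ℕ)
    (g G : V × V → ℕ) : Prop :=
  (∀ v : V,
    (∑ e ∈ E.filter (fun e => e.1 = v), (g e : ℤ)) -
      ∑ e ∈ E.filter (fun e => e.2 = v), (g e : ℤ) = (z0 v : ℤ) - zT v) ∧
  (∀ v : V,
    (∑ e ∈ E.filter (fun e => e.1 = v), (G e : ℤ)) -
      ∑ e ∈ E.filter (fun e => e.2 = v), (G e : ℤ) = 0) ∧
  ∀ e ∈ E, g e ≤ L * G e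

lemma mem_relocArcs' {E : Finset (V × V)} {d : V × V → ℕ} {T : ℕ}
    {a : (V × ℕ) × (V × ℕ)} :
    a ∈ relocArcs E d T ↔ (a.1.1, a.2.1) ∈ E ∧
      a.2.2 = a.1.2 + d (a.1.1, a.2.1) ∧ a.1.2 + d (a.1.1, a.2.1) ≤ T := by
  simp only [relocArcs, mem_filter, mem_product, mem_univ, true_and, mem_range]
  constructor
  · rintro ⟨-, h⟩; exact h
  · rintro ⟨h1, h2, h3⟩; exact ⟨⟨by omega, by omega⟩, h1, h2, h3⟩

lemma mem_holdArcs' {T : ℕ} {a : (V × ℕ) × (V × ℕ)} :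
    a ∈ (holdArcs T : Finset ((V × ℕ) × (V × ℕ))) ↔
      a.2.1 = a.1.1 ∧ a.2.2 = a.1.2 + 1 ∧ a.1.2 + 1 ≤ T := by
  simp only [holdArcs, mem_filter, mem_product, mem_univ, true_and, mem_range]
  constructor
  · rintro ⟨-, h⟩; exact h
  · rintro ⟨h1, h2, h3⟩; exact ⟨⟨by omega, by omega⟩, h1, h2, h3⟩

/-- projection of a time-expanded flow to a static flow on the edges -/
def projFlow (E : Finset (V × V)) (d : V × V → ℕ) (T : ℕ)
    (H : (V × ℕ) × (V × ℕ) → ℕ) (e : V × V) : ℕ :=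
  ∑ a ∈ (relocArcs E d T).filter (fun a => (a.1.1, a.2.1) = e), H a

lemma sum_out_eq (E : Finset (V × V)) (d : V × V → ℕ) (T : ℕ)
    (H : (V × ℕ) × (V × ℕ) → ℕ) (v : V) :
    ∑ t ∈ Finset.range (T + 1), outflow E d T H (v, t)
      = ∑ a ∈ (arcs E d T).filter (fun a => a.1.1 = v), H a := by
  have hmaps : ∀ a ∈ (arcs E d T).filter (fun a => a.1.1 = v),
      a.1.2 ∈ Finset.range (T + 1) := by
    intro a ha
    have := Finset.mem_filter.mp ha |>.1
    rcases Finset.mem_union.mp this with h | h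
    · have := mem_holdArcs'.mp h; exact Finset.mem_range.mpr (by omega)
    · have := mem_relocArcs'.mp h; exact Finset.mem_range.mpr (by omega)
  rw [← Finset.sum_fiberwise_of_maps_to hmaps H]
  refine Finset.sum_congr rfl fun t _ => ?_
  unfold outflow
  rw [Finset.filter_filter]
  refine Finset.sum_congr ?_ fun _ _ => rfl
  ext a
  simp only [Finset.mem_filter, Prod.ext_iff]

lemma sum_in_eq (E : Finset (V × V)) (d : V × V → ℕ) (T : ℕ)
    (H : (V × ℕ) × (V × ℕ) → ℕ) (v : V) :
    ∑ t ∈ Finset.range (T + 1), inflow E d T H (v, t)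
      = ∑ a ∈ (arcs E d T).filter (fun a => a.2.1 = v), H a := by
  have hmaps : ∀ a ∈ (arcs E d T).filter (fun a => a.2.1 = v),
      a.2.2 ∈ Finset.range (T + 1) := by
    intro a ha
    have := Finset.mem_filter.mp ha |>.1
    rcases Finset.mem_union.mp this with h | h
    · have := mem_holdArcs'.mp h; exact Finset.mem_range.mpr (by omega)
    · have := mem_relocArcs'.mp h; exact Finset.mem_range.mpr (by omega)
  rw [← Finset.sum_fiberwise_of_maps_to hmaps H]
  refine Finset.sum_congr rfl fun t _ => ?_
  unfold inflow
  rw [Finset.filter_filter]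
  refine Finset.sum_congr ?_ fun _ _ => rfl
  ext a
  simp only [Finset.mem_filter, Prod.ext_iff]

lemma disj_hold_reloc (E : Finset (V × V)) (d : V × V → ℕ) (T : ℕ)
    (hE : ∀ e ∈ E, e.1 ≠ e.2) :
    Disjoint (holdArcs T : Finset ((V × ℕ) × (V × ℕ))) (relocArcs E d T) := by
  rw [Finset.disjoint_left]
  intro a hh hr
  have h1 := mem_holdArcs'.mp hh
  have h2 := mem_relocArcs'.mp hr
  exact hE _ h2.1 (by simpa using h1.1.symm)

lemma reloc_filter_src (E : Finset (V × V)) (d : V × V → ℕ) (T : ℕ)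
    (H : (V × ℕ) × (V × ℕ) → ℕ) (v : V) :
    ∑ a ∈ (relocArcs E d T).filter (fun a => a.1.1 = v), H a
      = ∑ e ∈ E.filter (fun e => e.1 = v), projFlow E d T H e := by
  have hmaps : ∀ a ∈ (relocArcs E d T).filter (fun a => a.1.1 = v),
      (a.1.1, a.2.1) ∈ E.filter (fun e => e.1 = v) := by
    intro a ha
    have h1 := Finset.mem_filter.mp ha
    exact Finset.mem_filter.mpr ⟨(mem_relocArcs'.mp h1.1).1, h1.2⟩
  rw [← Finset.sum_fiberwise_of_maps_to hmaps H]
  refine Finset.sum_congr rfl fun e he => ?_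
  unfold projFlow
  rw [Finset.filter_filter]
  refine Finset.sum_congr ?_ fun _ _ => rfl
  ext a
  simp only [Finset.mem_filter]
  constructor
  · rintro ⟨h1, -, h3⟩; exact ⟨h1, h3⟩
  · rintro ⟨h1, h2⟩
    refine ⟨h1, ?_, h2⟩
    have := (Finset.mem_filter.mp he).2
    rw [show a.1.1 = e.1 from congrArg Prod.fst h2]
    exact this

lemma reloc_filter_tgt (E : Finset (V × V)) (d : V × V → ℕ) (T : ℕ)
    (H : (V × ℕ) × (V × ℕ) → ℕ) (v : V) :
    ∑ a ∈ (relocArcs E d T).filter (fun a => a.2.1 = v), H a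
      = ∑ e ∈ E.filter (fun e => e.2 = v), projFlow E d T H e := by
  have hmaps : ∀ a ∈ (relocArcs E d T).filter (fun a => a.2.1 = v),
      (a.1.1, a.2.1) ∈ E.filter (fun e => e.2 = v) := by
    intro a ha
    have h1 := Finset.mem_filter.mp ha
    exact Finset.mem_filter.mpr ⟨(mem_relocArcs'.mp h1.1).1, h1.2⟩
  rw [← Finset.sum_fiberwise_of_maps_to hmaps H]
  refine Finset.sum_congr rfl fun e he => ?_
  unfold projFlow
  rw [Finset.filter_filter]
  refine Finset.sum_congr ?_ fun _ _ => rfl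
  ext a
  simp only [Finset.mem_filter]
  constructor
  · rintro ⟨h1, -, h3⟩; exact ⟨h1, h3⟩
  · rintro ⟨h1, h2⟩
    refine ⟨h1, ?_, h2⟩
    have := (Finset.mem_filter.mp he).2
    rw [show a.2.1 = e.2 from congrArg Prod.snd h2]
    exact this

lemma inflow_zero (E : Finset (V × V)) (d : V × V → ℕ) (T : ℕ)
    (hd : ∀ e ∈ E, 1 ≤ d e)
    (H : (V × ℕ) × (V × ℕ) → ℕ) (v : V) :
    inflow E d T H (v, 0) = 0 := by
  apply Finset.sum_eq_zero
  intro a ha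
  exfalso
  have h1 := Finset.mem_filter.mp ha
  have h2 : a.2.2 = 0 := congrArg Prod.snd h1.2
  rcases Finset.mem_union.mp h1.1 with h | h
  · have := mem_holdArcs'.mp h; omega
  · have h3 := mem_relocArcs'.mp h
    have := hd _ h3.1
    omega

lemma outflow_zero (E : Finset (V × V)) (d : V × V → ℕ) (T : ℕ)
    (hd : ∀ e ∈ E, 1 ≤ d e)
    (H : (V × ℕ) × (V × ℕ) → ℕ) (v : V) :
    outflow E d T H (v, T) = 0 := by
  apply Finset.sum_eq_zero
  intro a ha
  exfalso
  have h1 := Finset.mem_filter.mp ha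
  have h2 : a.1.2 = T := congrArg Prod.snd h1.2
  rcases Finset.mem_union.mp h1.1 with h | h
  · have := mem_holdArcs'.mp h; omega
  · have h3 := mem_relocArcs'.mp h
    have := hd _ h3.1
    omega

lemma telescope (u w : ℕ → ℤ) (T : ℕ) (h0 : w 0 = 0) (hT : u T = 0)
    (hmid : ∀ t, 0 < t → t < T → u t = w t) :
    ∑ t ∈ Finset.range (T + 1), (u t - w t) = u 0 - w T := by
  rw [Finset.sum_range_succ]
  rcases Nat.eq_zero_or_pos T with h | h
  · subst h; simp [h0]
  · have : ∑ t ∈ Finset.range T, (u t - w t) = u 0 - w 0 := by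
      apply Finset.sum_eq_single_of_mem 0 (Finset.mem_range.mpr h)
      intro t ht hne
      have := hmid t (Nat.pos_of_ne_zero hne) (Finset.mem_range.mp ht)
      omega
    rw [this, h0, hT]; ring

/-- net static outflow of the projected flow = source outflow minus sink inflow -/
lemma net_proj (E : Finset (V × V)) (d : V × V → ℕ) (T : ℕ)
    (hE : ∀ e ∈ E, e.1 ≠ e.2) (hd : ∀ e ∈ E, 1 ≤ d e)
    (H : (V × ℕ) × (V × ℕ) → ℕ) (v : V)
    (hcons : ∀ t : ℕ, 0 < t → t < T →
      outflow E d T H (v, t) = inflow E d T H (v, t)) :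
    (∑ e ∈ E.filter (fun e => e.1 = v), (projFlow E d T H e : ℤ)) -
        ∑ e ∈ E.filter (fun e => e.2 = v), (projFlow E d T H e : ℤ)
      = (outflow E d T H (v, 0) : ℤ) - inflow E d T H (v, T) := by
  have key : ∑ t ∈ Finset.range (T + 1),
      ((outflow E d T H (v, t) : ℤ) - inflow E d T H (v, t))
      = (outflow E d T H (v, 0) : ℤ) - inflow E d T H (v, T) := by
    apply telescope
    · exact_mod_cast inflow_zero E d T hd H v
    · exact_mod_cast outflow_zero E d T hd H v
    · intro t ht1 ht2; exact_mod_cast hcons t ht1 ht2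
  have houtN : ∑ t ∈ Finset.range (T + 1), outflow E d T H (v, t)
      = (∑ a ∈ (holdArcs T).filter (fun a => a.1.1 = v), H a)
        + ∑ e ∈ E.filter (fun e => e.1 = v), projFlow E d T H e := by
    rw [sum_out_eq, arcs, Finset.filter_union,
      Finset.sum_union (Finset.disjoint_filter_filter (disj_hold_reloc E d T hE)),
      reloc_filter_src]
  have hh : (holdArcs T : Finset ((V × ℕ) × (V × ℕ))).filter (fun a => a.2.1 = v)
      = (holdArcs T).filter (fun a => a.1.1 = v) := by
    ext a
    simp only [Finset.mem_filter]
    constructor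
    · rintro ⟨h, h2⟩; exact ⟨h, ((mem_holdArcs'.mp h).1.symm).trans h2⟩
    · rintro ⟨h, h2⟩; exact ⟨h, (mem_holdArcs'.mp h).1.trans h2⟩
  have hinN : ∑ t ∈ Finset.range (T + 1), inflow E d T H (v, t)
      = (∑ a ∈ (holdArcs T).filter (fun a => a.1.1 = v), H a)
        + ∑ e ∈ E.filter (fun e => e.2 = v), projFlow E d T H e := by
    rw [sum_in_eq, arcs, Finset.filter_union,
      Finset.sum_union (Finset.disjoint_filter_filter (disj_hold_reloc E d T hE)),
      reloc_filter_tgt, hh]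
  have hout : (∑ t ∈ Finset.range (T + 1), (outflow E d T H (v, t) : ℤ))
      = ((∑ a ∈ (holdArcs T).filter (fun a => a.1.1 = v), H a : ℕ) : ℤ)
        + ∑ e ∈ E.filter (fun e => e.1 = v), (projFlow E d T H e : ℤ) := by
    exact_mod_cast congrArg (Nat.cast : ℕ → ℤ) houtN
  have hin : (∑ t ∈ Finset.range (T + 1), (inflow E d T H (v, t) : ℤ))
      = ((∑ a ∈ (holdArcs T).filter (fun a => a.1.1 = v), H a : ℕ) : ℤ)
        + ∑ e ∈ E.filter (fun e => e.2 = v), (projFlow E d T H e : ℤ) := by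
    exact_mod_cast congrArg (Nat.cast : ℕ → ℤ) hinN
  rw [Finset.sum_sub_distrib, hout, hin] at key
  linarith

lemma cost_eq (E : Finset (V × V)) (d : V × V → ℕ) (T : ℕ)
    (hE : ∀ e ∈ E, e.1 ≠ e.2)
    (H : (V × ℕ) × (V × ℕ) → ℕ) :
    ∑ a ∈ relocArcs E d T, arcCost d a * H a
      = ∑ e ∈ E, d e * projFlow E d T H e := by
  have hmaps : ∀ a ∈ relocArcs E d T, (a.1.1, a.2.1) ∈ E :=
    fun a ha => (mem_relocArcs'.mp ha).1
  rw [← Finset.sum_fiberwise_of_maps_to hmaps (fun a => arcCost d a * H a)]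
  refine Finset.sum_congr rfl fun e he => ?_
  rw [projFlow, Finset.mul_sum]
  refine Finset.sum_congr rfl fun a ha => ?_
  have h1 := Finset.mem_filter.mp ha
  have hne : a.1.1 ≠ a.2.1 := by
    have := hE _ (mem_relocArcs'.mp h1.1).1
    simpa using this
  rw [arcCost, if_neg hne, h1.2]

/-- **Static lower bound for the time-expanded problem.**  Let `m` be the
minimum of `Σ_{e ∈ E} d(e)·G(e)` over all static feasible pairs `(g, G)`
(assuming at least one such pair exists).  Then every coupled pair `(f, F)` of
car and driver flows on the time-expanded network `G^T` has total cost
`Σ_{a ∈ A_L} C(a)·F(a) ≥ m`. -/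
theorem static_lower_bound_for_time_expanded
    (E : Finset (V × V)) (d : V × V → ℕ) (T k L : ℕ) (v0 : V)
    (hE : ∀ e ∈ E, e.1 ≠ e.2) (hd : ∀ e ∈ E, 1 ≤ d e) (hL : 1 ≤ L)
    (z0 zT : V → ℕ) (m : ℕ)
    (hm : IsLeast {c : ℕ | ∃ g G : V × V → ℕ,
        StaticFeasible E L z0 zT g G ∧ c = ∑ e ∈ E, d e * G e} m)
    (f F : (V × ℕ) × (V × ℕ) → ℕ)
    (hcar_src : ∀ v : V, outflow E d T f (v, 0) = z0 v)
    (hcar_sink : ∀ v : V, inflow E d T f (v, T) = zT v)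
    (hcar_cons : ∀ (v : V) (t : ℕ), 0 < t → t < T →
      outflow E d T f (v, t) = inflow E d T f (v, t))
    (hdrv_src : outflow E d T F (v0, 0) = k)
    (hdrv_src0 : ∀ v : V, v ≠ v0 → outflow E d T F (v, 0) = 0)
    (hdrv_sink : inflow E d T F (v0, T) = k)
    (hdrv_sink0 : ∀ v : V, v ≠ v0 → inflow E d T F (v, T) = 0)
    (hdrv_cons : ∀ (v : V) (t : ℕ), 0 < t → t < T →
      outflow E d T F (v, t) = inflow E d T F (v, t))
    (hcouple : ∀ a ∈ relocArcs E d T, f a ≤ L * F a) :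
    m ≤ ∑ a ∈ relocArcs E d T, arcCost d a * F a := by
  have hfeas : StaticFeasible E L z0 zT (projFlow E d T f) (projFlow E d T F) := by
    refine ⟨fun v => ?_, fun v => ?_, fun e _ => ?_⟩
    · rw [net_proj E d T hE hd f v (hcar_cons v), hcar_src v, hcar_sink v]
    · rw [net_proj E d T hE hd F v (hdrv_cons v)]
      by_cases hv : v = v0
      · subst hv; rw [hdrv_src, hdrv_sink]; ring
      · rw [hdrv_src0 v hv, hdrv_sink0 v hv]; ring
    · rw [projFlow, projFlow, Finset.mul_sum]
      exact Finset.sum_le_sum fun a ha => hcouple a (Finset.mem_filter.mp ha).1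
  rw [cost_eq E d T hE F]
  exact hm.2 ⟨projFlow E d T f, projFlow E d T F, hfeas, rfl⟩
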